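/- arXiv:2211.09432 — 2 statements merged into one kernel-verified Lean document; each statement's English description precedes it below -/
import Mathlib

section
/- Let ℓ ≥ 3 and k ≥ 0 be integers, and write n = k + d(ℓ−1) + r with d ≥ 0 and 0 ≤ r < ℓ−1. Then the graph G₁(n,k,ℓ) = K_k ∨ (dK_{ℓ−1} ∪ K_r) contains no subgraph isomorphic to P_ℓ ∪ kS_{ℓ−1}. -/
open SimpleGraph

/-- The number of edges of a simple graph. -/
noncomputable def edgeCount {V : Type*} (G : SimpleGraph V) : ℕ :=
  Nat.card G.edgeSet

/-- `Contains G H` means `G` contains a subgraph isomorphic to `H`,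
i.e. there is an injective graph homomorphism from `H` to `G`. -/
def Contains {V W : Type*} (G : SimpleGraph V) (H : SimpleGraph W) : Prop :=
  ∃ f : H →g G, Function.Injective f

/-- The Turán number `ex(n, H)`: the maximum number of edges of a simple graph on `n`
vertices containing no subgraph isomorphic to `H`. -/
noncomputable def exNum (n : ℕ) {W : Type*} (H : SimpleGraph W) : ℕ :=
  sSup {m : ℕ | ∃ G : SimpleGraph (Fin n), ¬ Contains G H ∧ edgeCount G = m}

/-- The disjoint union of `k` copies of `G`. -/
def copies {V : Type*} (k : ℕ) (G : SimpleGraph V) : SimpleGraph (Fin k × V) where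
  Adj u v := u.1 = v.1 ∧ G.Adj u.2 v.2
  symm := ⟨fun u v h => ⟨h.1.symm, G.adj_symm h.2⟩⟩
  loopless := ⟨fun u h => G.irrefl h.2⟩

/-- The join `G ∨ H` of two graphs: their disjoint union together with all edges
between the two vertex sets. -/
def graphJoin {V W : Type*} (G : SimpleGraph V) (H : SimpleGraph W) : SimpleGraph (V ⊕ W) where
  Adj u v := (G.sum H).Adj u v ∨ (u.isLeft ∧ v.isRight) ∨ (u.isRight ∧ v.isLeft)
  symm := ⟨fun u v h => by
    rcases h with h | ⟨h1, h2⟩ | ⟨h1, h2⟩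
    · exact Or.inl ((G.sum H).adj_symm h)
    · exact Or.inr (Or.inr ⟨h2, h1⟩)
    · exact Or.inr (Or.inl ⟨h2, h1⟩)⟩
  loopless := ⟨fun u => by cases u <;> simp [SimpleGraph.sum]⟩

/-- The star with `m` leaves (a graph on `m + 1` vertices). -/
def starGraph' (m : ℕ) : SimpleGraph (Fin 1 ⊕ Fin m) :=
  completeBipartiteGraph (Fin 1) (Fin m)

/-! Deleting the `K_k` part of `G₁` leaves only cliques on at most `ℓ - 1` vertices, whereas each of
the `k + 1` components of `P_ℓ ∪ k S_{ℓ-1}` is connected on `ℓ` vertices. An embedding therefore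
sends some vertex of every component into `K_k`, which is impossible for `k + 1` distinct vertices. -/

section
variable {V U W : Type*} {a : ℕ}

theorem SimpleGraph.Reachable.apply_eq_of_forall_adj {α : Type*} {G : SimpleGraph V} {f : V → α}
    (hf : ∀ ⦃u v⦄, G.Adj u v → f u = f v) {u v : V} (h : G.Reachable u v) : f u = f v := by
  rw [reachable_eq_reflTransGen] at h
  induction h with
  | refl => rfl
  | tail _ hadj ih => exact ih.trans (hf hadj)

theorem starGraph'_preconnected (m : ℕ) : (starGraph' m).Preconnected := by
  have hcenter : (starGraph' m).IsUniversal (Sum.inl 0) := by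
    rintro (c | x) hne
    · exact absurd (congrArg Sum.inl (Subsingleton.elim 0 c)) hne
    · simp [starGraph']
  exact fun u v => (Reachable.of_isUniversal u hcenter).symm.trans (.of_isUniversal v hcenter)

theorem graphJoin_adj_inr_inr {G : SimpleGraph V} {H : SimpleGraph W} {x y : W} :
    (graphJoin G H).Adj (Sum.inr x) (Sum.inr y) ↔ H.Adj x y := by
  simp [graphJoin]

def copiesEmbedding (k : ℕ) (G : SimpleGraph V) (i : Fin k) : G ↪g copies k G where
  toFun v := (i, v)
  inj' _ _ h := (Prod.mk.inj h).2
  map_rel_iff' := ⟨fun h => h.2, fun h => ⟨rfl, h⟩⟩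

theorem Fintype.card_le_of_injective_of_isLeft {T X Y : Type*} [Fintype T] [Fintype X]
    (g : T → X ⊕ Y) (hg : Function.Injective g) (hl : ∀ t, (g t).isLeft) :
    Fintype.card T ≤ Fintype.card X :=
  Fintype.card_le_of_injective (fun t => (g t).getLeft (hl t)) fun t t' h => hg <| by
    rw [← Sum.inl_getLeft (g t) (hl t), ← Sum.inl_getLeft (g t') (hl t')]
    exact congrArg Sum.inl h

def blockLabel : (Fin a × V) ⊕ U → Option (Fin a) :=
  Sum.elim (fun x => some x.1) fun _ => none

theorem blockLabel_eq_of_adj {G : SimpleGraph V} {H : SimpleGraph U} {x y : (Fin a × V) ⊕ U}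
    (h : (copies a G ⊕g H).Adj x y) : blockLabel x = blockLabel y := by
  rcases x with x | x <;> rcases y with y | y
  · exact congrArg some h.1
  all_goals simp_all [blockLabel]

theorem card_le_of_injective_of_blockLabel_eq {T : Type*} [Fintype T] [Fintype V] (e : U ↪ V)
    (g : T → (Fin a × V) ⊕ U) (hg : Function.Injective g)
    (hlabel : ∀ t t', blockLabel (g t) = blockLabel (g t')) :
    Fintype.card T ≤ Fintype.card V := by
  have hpos : ∀ x y : (Fin a × V) ⊕ U, blockLabel x = blockLabel y →
      Sum.elim Prod.snd e x = Sum.elim Prod.snd e y → x = y := by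
    rintro (x | x) (y | y) hl hp <;> simp_all [blockLabel, Prod.ext_iff]
  exact Fintype.card_le_of_injective _ fun t t' h => hg (hpos _ _ (hlabel t t') h)

theorem card_le_of_injective_hom_copies_sum {G : SimpleGraph V} {K : SimpleGraph U}
    {H : SimpleGraph W} [Fintype W] [Fintype V] (hH : H.Preconnected) (e : U ↪ V)
    (f : H →g copies a G ⊕g K) (hf : Function.Injective f) :
    Fintype.card W ≤ Fintype.card V :=
  card_le_of_injective_of_blockLabel_eq e f hf fun w w' =>
    (hH w w').apply_eq_of_forall_adj fun _ _ h => blockLabel_eq_of_adj (f.map_adj h)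

theorem exists_isLeft_of_injective_hom_graphJoin {X : Type*} {L : SimpleGraph X}
    {G : SimpleGraph V} {K : SimpleGraph U} {H : SimpleGraph W} [Fintype W] [Fintype V]
    (hH : H.Preconnected) (e : U ↪ V) (hcard : Fintype.card V < Fintype.card W)
    (f : H →g graphJoin L (copies a G ⊕g K)) (hf : Function.Injective f) :
    ∃ w, (f w).isLeft := by
  by_contra! hright
  have hr : ∀ w, (f w).isRight := fun w => Sum.not_isLeft.mp (hright w)
  let g : H →g copies a G ⊕g K :=
    { toFun w := (f w).getRight (hr w)
      map_rel' {w w'} h := by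
        rw [← graphJoin_adj_inr_inr, Sum.inr_getRight, Sum.inr_getRight]
        exact f.map_adj h }
  have hg : Function.Injective g := fun w w' h => hf <| by
    rw [← Sum.inr_getRight (f w) (hr w), ← Sum.inr_getRight (f w') (hr w')]
    exact congrArg Sum.inr h
  exact hcard.not_ge (card_le_of_injective_hom_copies_sum hH e g hg)

end

theorem G1_free_general (ℓ k d r : ℕ) (hℓ : 3 ≤ ℓ) (hr : r < ℓ - 1) :
    ¬ Contains
      (graphJoin (⊤ : SimpleGraph (Fin k))
        (copies d (⊤ : SimpleGraph (Fin (ℓ - 1))) ⊕g (⊤ : SimpleGraph (Fin r))))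
      (pathGraph ℓ ⊕g copies k (starGraph' (ℓ - 1))) := by
  rintro ⟨f, hf⟩
  let e : Fin r ↪ Fin (ℓ - 1) := Fin.castLEEmb hr.le
  obtain ⟨p, hp⟩ := exists_isLeft_of_injective_hom_graphJoin (pathGraph_preconnected ℓ) e
    (by simp only [Fintype.card_fin]; omega) (f.comp Embedding.sumInl.toHom)
    (hf.comp Sum.inl_injective)
  have hstar (i : Fin k) : ∃ s, (f (Sum.inr (i, s))).isLeft :=
    let ι : starGraph' (ℓ - 1) ↪g pathGraph ℓ ⊕g copies k (starGraph' (ℓ - 1)) :=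
      Embedding.sumInr.comp (copiesEmbedding k _ i)
    exists_isLeft_of_injective_hom_graphJoin (starGraph'_preconnected _) e
      (by simp only [Fintype.card_sum, Fintype.card_fin]; omega) (f.comp ι.toHom)
      (hf.comp ι.injective)
  choose s hs using hstar
  let w : Unit ⊕ Fin k → Fin ℓ ⊕ (Fin k × (Fin 1 ⊕ Fin (ℓ - 1))) :=
    Sum.elim (fun _ => Sum.inl p) fun i => Sum.inr (i, s i)
  have hw : Function.Injective w :=
    Function.Injective.sumElim (fun _ _ _ => rfl)
      (fun i i' h => (Prod.mk.inj (Sum.inr_injective h)).1) (by simp)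
  have hcard := Fintype.card_le_of_injective_of_isLeft (f ∘ w) (hf.comp hw) (by
    rintro (_ | i)
    exacts [hp, hs i])
  simp only [Fintype.card_sum, Fintype.card_unit, Fintype.card_fin] at hcard
  omega

/-- `G₁(n,k,ℓ) = K_k ∨ (d K_{ℓ-1} ∪ K_r)` contains no copy of `P_ℓ ∪ k S_{ℓ-1}`. -/
theorem G1_free (ℓ k d r n : ℕ) (hℓ : 3 ≤ ℓ) (hn : n = k + d * (ℓ - 1) + r)
    (hr : r < ℓ - 1) :
    ¬ Contains
      (graphJoin (⊤ : SimpleGraph (Fin k))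
        (copies d (⊤ : SimpleGraph (Fin (ℓ - 1))) ⊕g (⊤ : SimpleGraph (Fin r))))
      (pathGraph ℓ ⊕g copies k (starGraph' (ℓ - 1))) :=
  G1_free_general ℓ k d r hℓ hr
end

section
/- Let ℓ ≥ 4 be an even integer, k ≥ 0 an integer, and n ≥ k + ℓ/2 − 1. Then the graph K_{k+ℓ/2−1} ∨ K̄_{n−k−ℓ/2+1} contains no subgraph isomorphic to P_ℓ ∪ kS_{ℓ−1}. -/
open SimpleGraph

/-- The star with `m` leaves (a graph on `m + 1` vertices). -/
def starGraph (m : ℕ) : SimpleGraph (Fin 1 ⊕ Fin m) :=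
  completeBipartiteGraph (Fin 1) (Fin m)

/-!
In `K_{k+ℓ/2-1} ∨ K̄_{n-k-ℓ/2+1}` the clique side is a vertex cover with `k + ℓ/2 - 1` vertices.
On the other hand `P_ℓ ∪ k S_{ℓ-1}` has `ℓ/2 + k` pairwise disjoint edges (every other edge of
the path and one edge of each star), so each of its vertex covers, and hence each vertex cover of
a graph containing it, has at least `ℓ/2 + k` vertices.
-/

theorem Contains.vertexCoverNum_le {V W : Type*} {G : SimpleGraph V} {H : SimpleGraph W}
    (h : Contains G H) : H.vertexCoverNum ≤ G.vertexCoverNum := by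
  obtain ⟨f, hf⟩ := h
  exact IsContained.vertexCoverNum_le_vertexCoverNum ⟨f, hf⟩

namespace SimpleGraph

variable {V W ι : Type*}

theorem card_le_vertexCoverNum_of_disjoint_edges {G : SimpleGraph V} (a b : ι → V)
    (hadj : ∀ i, G.Adj (a i) (b i))
    (hdisj : Pairwise fun i j => Disjoint ({a i, b i} : Set V) {a j, b j}) :
    ENat.card ι ≤ G.vertexCoverNum := by
  refine le_iInf₂ fun c hc => ?_
  have hmem : ∀ i, ∃ v ∈ c, v ∈ ({a i, b i} : Set V) := fun i => by
    rcases hc (hadj i) with h | h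
    · exact ⟨a i, h, by simp⟩
    · exact ⟨b i, h, by simp⟩
  choose v hvc hvab using hmem
  have hv_inj : Function.Injective v := fun i j hij => by
    by_contra hne
    exact Set.disjoint_left.mp (hdisj hne) (hvab i) (hij ▸ hvab j)
  rw [← Set.encard_univ]
  exact Set.encard_le_encard_of_injOn (fun i _ => hvc i) hv_inj.injOn

theorem vertexCoverNum_graphJoin_bot_le (G : SimpleGraph V) :
    (graphJoin G (⊥ : SimpleGraph W)).vertexCoverNum ≤ ENat.card V := by
  have hcover : (graphJoin G (⊥ : SimpleGraph W)).IsVertexCover (Set.range Sum.inl) := by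
    rintro (u | u) (v | v) h <;> simp_all [graphJoin]
  simpa [← Set.image_univ, Sum.inl_injective.encard_image] using hcover.vertexCoverNum_le

theorem le_vertexCoverNum_pathGraph_sum_copies {G : SimpleGraph V} {u v : V} (huv : G.Adj u v)
    (ℓ k : ℕ) : ((ℓ / 2 + k : ℕ) : ℕ∞) ≤ (pathGraph ℓ ⊕g copies k G).vertexCoverNum := by
  let a : Fin (ℓ / 2) ⊕ Fin k → Fin ℓ ⊕ (Fin k × V) :=
    Sum.elim (fun i => Sum.inl ⟨2 * i, by omega⟩) (fun j => Sum.inr (j, u))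
  let b : Fin (ℓ / 2) ⊕ Fin k → Fin ℓ ⊕ (Fin k × V) :=
    Sum.elim (fun i => Sum.inl ⟨2 * i + 1, by omega⟩) (fun j => Sum.inr (j, v))
  have hadj : ∀ i, (pathGraph ℓ ⊕g copies k G).Adj (a i) (b i) := by
    rintro (i | j)
    · simp [a, b, pathGraph_adj]
    · simpa [a, b, copies] using huv
  have hdisj : Pairwise fun i j =>
      Disjoint ({a i, b i} : Set (Fin ℓ ⊕ (Fin k × V))) {a j, b j} := by
    rintro (i | i) (j | j) hij
    · simp only [ne_eq, Sum.inl.injEq, Fin.ext_iff] at hij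
      simp only [a, b, Sum.elim_inl, Set.disjoint_left, Set.mem_insert_iff,
        Set.mem_singleton_iff, forall_eq_or_imp, forall_eq, Sum.inl.injEq, Fin.ext_iff]
      omega
    all_goals simp_all [a, b, Set.disjoint_left]
  simpa using card_le_vertexCoverNum_of_disjoint_edges a b hadj hdisj

end SimpleGraph

theorem G2_free_one_path_general (ℓ k n : ℕ) (hℓ : 4 ≤ ℓ) :
    ¬ Contains
      (graphJoin (⊤ : SimpleGraph (Fin (k + ℓ / 2 - 1)))
        (⊥ : SimpleGraph (Fin (n - k - ℓ / 2 + 1))))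
      (pathGraph ℓ ⊕g copies k (_root_.starGraph (ℓ - 1))) := by
  intro h
  have hstar : (_root_.starGraph (ℓ - 1)).Adj (Sum.inl 0) (Sum.inr ⟨0, by omega⟩) := by
    simp [_root_.starGraph]
  have hcover := (le_vertexCoverNum_pathGraph_sum_copies hstar ℓ k).trans
    (h.vertexCoverNum_le.trans (vertexCoverNum_graphJoin_bot_le _))
  simp only [ENat.card_eq_coe_fintype_card, Fintype.card_fin, Nat.cast_le] at hcover
  omega

/-- `K_{k+ℓ/2-1} ∨ K̄_{n-k-ℓ/2+1}` contains no copy of `P_ℓ ∪ k S_{ℓ-1}` for even `ℓ`. -/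
theorem G2_free_one_path (ℓ k n : ℕ) (hℓ : 4 ≤ ℓ) (heven : Even ℓ)
    (hn : k + ℓ / 2 - 1 ≤ n) :
    ¬ Contains
      (graphJoin (⊤ : SimpleGraph (Fin (k + ℓ / 2 - 1)))
        (⊥ : SimpleGraph (Fin (n - k - ℓ / 2 + 1))))
      (pathGraph ℓ ⊕g copies k (_root_.starGraph (ℓ - 1))) :=
  G2_free_one_path_general ℓ k n hℓ
end
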